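/- arXiv:1802.09932 — 2 statements merged into one kernel-verified Lean document; each statement's English description precedes it below -/
import Mathlib

section
/- Let f_i : ℝ^d → ℝ be convex and L-smooth for each i ∈ [n], let f = (1/n)∑ f_i with minimizer x*. For fixed points x and x̃, define for each i the variance-reduced estimator g_i = ∇f_i(x) − ∇f_i(x̃) + ∇f(x̃). Then (1/n) ∑_{i=1}^n ‖g_i − ∇f(x)‖² ≤ 4L [ f(x) − f(x*) + f(x̃) − f(x*) ]. -/
/-!
Write `u i = ∇f_i(x) - ∇f_i(x*)` and `v i = ∇f_i(x̃) - ∇f_i(x*)`. The deviation `g_i - ∇f(x)` is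
`u i - v i` minus its average, so its mean square is at most the mean square of `u i - v i`,
hence at most `2 · mean ‖u i‖² + 2 · mean ‖v i‖²`. Co-coercivity of the convex `L`-smooth `f_i`,
averaged over `i` and using `∇f(x*) = 0`, bounds `mean ‖u i‖²` by `2L (f(x) - f(x*))`, and
likewise for `v`.
-/

open scoped RealInnerProductSpace
open Finset

theorem norm_sub_sq_le {E : Type*} [SeminormedAddCommGroup E] (u v : E) :
    ‖u - v‖ ^ 2 ≤ 2 * ‖u‖ ^ 2 + 2 * ‖v‖ ^ 2 :=
  calc ‖u - v‖ ^ 2 ≤ (‖u‖ + ‖v‖) ^ 2 := by gcongr; exact norm_sub_le u v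
    _ ≤ 2 * ‖u‖ ^ 2 + 2 * ‖v‖ ^ 2 := by linarith [add_sq_le (a := ‖u‖) (b := ‖v‖)]

section Average

variable {F ι : Type*} [NormedAddCommGroup F] [InnerProductSpace ℝ F]

theorem sum_norm_sub_average_sq_le (s : Finset ι) (A : ι → F) :
    ∑ i ∈ s, ‖A i - (#s : ℝ)⁻¹ • ∑ j ∈ s, A j‖ ^ 2 ≤ ∑ i ∈ s, ‖A i‖ ^ 2 := by
  set S := (#s : ℝ)⁻¹ • ∑ j ∈ s, A j
  have hsum : ∑ j ∈ s, A j = (#s : ℝ) • S := by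
    rcases s.eq_empty_or_nonempty with rfl | hs
    · rw [sum_empty, card_empty, Nat.cast_zero, zero_smul]
    · rw [smul_inv_smul₀ (by exact_mod_cast hs.card_pos.ne')]
  have hexpand : ∑ i ∈ s, ‖A i - S‖ ^ 2 = ∑ i ∈ s, ‖A i‖ ^ 2 - #s * ‖S‖ ^ 2 := by
    rw [sum_congr rfl fun i _ => norm_sub_sq_real (A i) S, sum_add_distrib, sum_sub_distrib,
      ← mul_sum, ← sum_inner, hsum, real_inner_smul_left, real_inner_self_eq_norm_sq, sum_const,
      nsmul_eq_mul]
    ring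
  rw [hexpand]
  linarith [mul_nonneg (Nat.cast_nonneg (α := ℝ) #s) (sq_nonneg ‖S‖)]

theorem sum_norm_sub_sub_average_sq_le (s : Finset ι) (u v : ι → F) :
    ∑ i ∈ s, ‖(u i - v i) - (#s : ℝ)⁻¹ • ∑ j ∈ s, (u j - v j)‖ ^ 2 ≤
      2 * ∑ i ∈ s, ‖u i‖ ^ 2 + 2 * ∑ i ∈ s, ‖v i‖ ^ 2 :=
  calc _ ≤ ∑ i ∈ s, ‖u i - v i‖ ^ 2 := sum_norm_sub_average_sq_le s fun i => u i - v i
    _ ≤ ∑ i ∈ s, (2 * ‖u i‖ ^ 2 + 2 * ‖v i‖ ^ 2) := sum_le_sum fun i _ => norm_sub_sq_le _ _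
    _ = _ := by rw [sum_add_distrib, mul_sum, mul_sum]

end Average

section Gradient

variable {F : Type*} [NormedAddCommGroup F] [InnerProductSpace ℝ F] [CompleteSpace F]
  {g : F → ℝ} {L : ℝ}

theorem hasDerivAt_comp_add_smul {x v : F} {t : ℝ} (hg : DifferentiableAt ℝ g (x + t • v)) :
    HasDerivAt (fun s : ℝ => g (x + s • v)) ⟪gradient g (x + t • v), v⟫ t := by
  have hline : HasDerivAt (fun s : ℝ => x + s • v) v t := by
    simpa using ((hasDerivAt_id t).smul_const v).const_add x
  exact hg.hasGradientAt.hasFDerivAt.comp_hasDerivAt t hline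

theorem ConvexOn.add_inner_gradient_le (hconv : ConvexOn ℝ Set.univ g) {x : F}
    (hg : DifferentiableAt ℝ g x) (y : F) : g x + ⟪gradient g x, y - x⟫ ≤ g y := by
  have hline : ConvexOn ℝ Set.univ (fun t : ℝ => g (x + t • (y - x))) := by
    simpa [Function.comp_def, AffineMap.lineMap_apply, add_comm] using
      hconv.comp_affineMap (AffineMap.lineMap x y : ℝ →ᵃ[ℝ] F)
  have hderiv := hasDerivAt_comp_add_smul (x := x) (v := y - x) (t := 0) (by simpa using hg)
  have := hline.le_slope_of_hasDerivAt (Set.mem_univ 0) (Set.mem_univ 1) one_pos hderiv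
  simp only [slope_def_field, zero_smul, add_zero, one_smul, sub_zero, div_one,
    add_sub_cancel] at this
  linarith

/-- The descent lemma. -/
theorem le_add_inner_gradient_add_sq_norm (hg : Differentiable ℝ g)
    (hlip : ∀ a b, ‖gradient g a - gradient g b‖ ≤ L * ‖a - b‖) (x v : F) :
    g (x + v) ≤ g x + ⟪gradient g x, v⟫ + L / 2 * ‖v‖ ^ 2 := by
  set ψ : ℝ → ℝ := fun t => g (x + t • v) - t * ⟪gradient g x, v⟫ - L / 2 * t ^ 2 * ‖v‖ ^ 2
  have hψ : ∀ t, HasDerivAt ψ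
      (⟪gradient g (x + t • v), v⟫ - ⟪gradient g x, v⟫ - L * t * ‖v‖ ^ 2) t := by
    intro t
    exact (((hasDerivAt_comp_add_smul (hg _)).sub ((hasDerivAt_id t).mul_const _)).sub
      (((hasDerivAt_pow 2 t).const_mul (L / 2)).mul_const _)).congr_deriv (by
        simp only [one_mul, Nat.cast_ofNat, Nat.add_one_sub_one, pow_one]; ring)
  have hanti : AntitoneOn ψ (Set.Ici 0) := by
    refine antitoneOn_of_hasDerivWithinAt_nonpos (convex_Ici 0)
      (fun t _ => (hψ t).continuousAt.continuousWithinAt) (fun t _ => (hψ t).hasDerivWithinAt) ?_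
    intro t ht
    rw [interior_Ici, Set.mem_Ioi] at ht
    have : ⟪gradient g (x + t • v) - gradient g x, v⟫ ≤ L * t * ‖v‖ ^ 2 :=
      calc ⟪gradient g (x + t • v) - gradient g x, v⟫
          ≤ ‖gradient g (x + t • v) - gradient g x‖ * ‖v‖ := real_inner_le_norm _ _
        _ ≤ L * ‖(x + t • v) - x‖ * ‖v‖ := by gcongr; exact hlip _ _
        _ = L * t * ‖v‖ ^ 2 := by
          rw [add_sub_cancel_left, norm_smul, Real.norm_of_nonneg ht.le]; ring
    rw [inner_sub_left] at this
    linarith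
  have := hanti (Set.mem_Ici.2 le_rfl) (Set.mem_Ici.2 zero_le_one) zero_le_one
  simp only [ψ, zero_smul, add_zero, zero_mul, sub_zero, one_smul, one_mul, ne_eq,
    OfNat.ofNat_ne_zero, not_false_eq_true, zero_pow, mul_zero, one_pow, mul_one] at this
  linarith

/-- Co-coercivity of the gradient of a convex `L`-smooth function. -/
theorem ConvexOn.sq_norm_gradient_sub_le (hconv : ConvexOn ℝ Set.univ g)
    (hg : Differentiable ℝ g) (hL : 0 < L)
    (hlip : ∀ a b, ‖gradient g a - gradient g b‖ ≤ L * ‖a - b‖) (x y : F) :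
    ‖gradient g x - gradient g y‖ ^ 2 ≤ 2 * L * (g x - g y - ⟪gradient g y, x - y⟫) := by
  -- compare the convexity lower bound at `y` with the descent step from `x` along `-(∇g x - ∇g y) / L`
  set w := gradient g x - gradient g y
  set v := -(L⁻¹ • w)
  have hlower := hconv.add_inner_gradient_le (hg y) (x + v)
  have hupper := le_add_inner_gradient_add_sq_norm hg hlip x v
  have hstep : ⟪gradient g x, v⟫ - ⟪gradient g y, v⟫ = -(L⁻¹ * ‖w‖ ^ 2) := by
    rw [← inner_sub_left, inner_neg_right, real_inner_smul_right, real_inner_self_eq_norm_sq]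
  have hv : ‖v‖ ^ 2 = L⁻¹ ^ 2 * ‖w‖ ^ 2 := by
    rw [norm_neg, norm_smul, Real.norm_of_nonneg (inv_nonneg.2 hL.le)]; ring
  rw [show x + v - y = (x - y) + v by abel, inner_add_right] at hlower
  rw [hv] at hupper
  have : L⁻¹ / 2 * ‖w‖ ^ 2 ≤ g x - g y - ⟪gradient g y, x - y⟫ := by
    have : L / 2 * (L⁻¹ ^ 2 * ‖w‖ ^ 2) = L⁻¹ / 2 * ‖w‖ ^ 2 := by field_simp
    nlinarith
  calc ‖w‖ ^ 2 = 2 * L * (L⁻¹ / 2 * ‖w‖ ^ 2) := by field_simp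
    _ ≤ _ := by gcongr

theorem hasGradientAt_const_mul_sum {ι : Type*} (s : Finset ι) {f : ι → F → ℝ}
    {x : F} (hf : ∀ i ∈ s, DifferentiableAt ℝ (f i) x) (c : ℝ) :
    HasGradientAt (fun z => c * ∑ i ∈ s, f i z) (c • ∑ i ∈ s, gradient (f i) x) x := by
  rw [hasGradientAt_iff_hasFDerivAt, map_smul, map_sum]
  simp only [toDual_gradient]
  exact (HasFDerivAt.fun_sum fun i hi => (hf i hi).hasFDerivAt).const_mul c

theorem ConvexOn.average_sq_norm_gradient_sub_le {ι : Type*} [Fintype ι] {f : ι → F → ℝ}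
    (hconv : ∀ i, ConvexOn ℝ Set.univ (f i)) (hdiff : ∀ i, Differentiable ℝ (f i)) (hL : 0 < L)
    (hlip : ∀ i a b, ‖gradient (f i) a - gradient (f i) b‖ ≤ L * ‖a - b‖) {c : ℝ} (hc : 0 ≤ c)
    (x y : F) :
    c * ∑ i, ‖gradient (f i) x - gradient (f i) y‖ ^ 2 ≤
      2 * L * (c * ∑ i, f i x - c * ∑ i, f i y -
        ⟪gradient (fun z => c * ∑ i, f i z) y, x - y⟫) := by
  rw [(hasGradientAt_const_mul_sum univ (fun i _ => hdiff i y) c).gradient, real_inner_smul_left,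
    sum_inner]
  calc c * ∑ i, ‖gradient (f i) x - gradient (f i) y‖ ^ 2
      ≤ c * ∑ i, 2 * L * (f i x - f i y - ⟪gradient (f i) y, x - y⟫) := by
        gcongr with i
        exact (hconv i).sq_norm_gradient_sub_le (hdiff i) hL (hlip i) x y
    _ = _ := by rw [← mul_sum, sum_sub_distrib, sum_sub_distrib]; ring

end Gradient

theorem stmt_1_general (d n : ℕ) (L : ℝ) (hL : 0 < L)
    (f : Fin n → EuclideanSpace ℝ (Fin d) → ℝ)
    (hconv : ∀ i, ConvexOn ℝ Set.univ (f i))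
    (hdiff : ∀ i, Differentiable ℝ (f i))
    (hlip : ∀ i x y, ‖gradient (f i) x - gradient (f i) y‖ ≤ L * ‖x - y‖)
    (favg : EuclideanSpace ℝ (Fin d) → ℝ)
    (hfavg : ∀ x, favg x = (1 / n : ℝ) * ∑ i, f i x)
    (xstar : EuclideanSpace ℝ (Fin d))
    (hmin : ∀ x, favg xstar ≤ favg x)
    (x xt : EuclideanSpace ℝ (Fin d)) :
    (1 / n : ℝ) * ∑ i,
        ‖(gradient (f i) x - gradient (f i) xt + gradient favg xt) - gradient favg x‖ ^ 2
      ≤ 4 * L * ((favg x - favg xstar) + (favg xt - favg xstar)) := by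
  obtain rfl : favg = fun z => (1 / n : ℝ) * ∑ i, f i z := funext hfavg
  have hstar : gradient (fun z => (1 / n : ℝ) * ∑ i, f i z) xstar = 0 := by
    rw [gradient, IsLocalMin.fderiv_eq_zero (.of_forall hmin), map_zero]
  have hbound : ∀ z, (1 / n : ℝ) * ∑ i, ‖gradient (f i) z - gradient (f i) xstar‖ ^ 2 ≤
      2 * L * ((1 / n : ℝ) * ∑ i, f i z - (1 / n : ℝ) * ∑ i, f i xstar) := fun z => by
    have := ConvexOn.average_sq_norm_gradient_sub_le hconv hdiff hL hlip
      (c := 1 / n) (by positivity) z xstar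
    rwa [hstar, inner_zero_left, sub_zero] at this
  set u := fun i => gradient (f i) x - gradient (f i) xstar
  set v := fun i => gradient (f i) xt - gradient (f i) xstar
  have hdev : ∀ i, gradient (f i) x - gradient (f i) xt
        + gradient (fun z => (1 / n : ℝ) * ∑ i, f i z) xt
        - gradient (fun z => (1 / n : ℝ) * ∑ i, f i z) x =
      (u i - v i) - (1 / n : ℝ) • ∑ j, (u j - v j) := fun i => by
    rw [(hasGradientAt_const_mul_sum univ (fun i _ => hdiff i x) _).gradient,
      (hasGradientAt_const_mul_sum univ (fun i _ => hdiff i xt) _).gradient]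
    simp only [u, v, sub_sub_sub_cancel_right, sum_sub_distrib, smul_sub]
    abel
  calc _ = (1 / n : ℝ) * ∑ i, ‖(u i - v i) - (1 / n : ℝ) • ∑ j, (u j - v j)‖ ^ 2 := by
        simp only [hdev]
    _ ≤ (1 / n : ℝ) * (2 * ∑ i, ‖u i‖ ^ 2 + 2 * ∑ i, ‖v i‖ ^ 2) := by
        gcongr _ * ?_
        simpa using sum_norm_sub_sub_average_sq_le univ u v
    _ ≤ _ := by
        rw [mul_add, mul_left_comm _ 2, mul_left_comm _ 2]
        linarith [hbound x, hbound xt]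

/-- variance bound for the SVRG gradient estimator. -/
theorem stmt_1 (d n : ℕ) (hn : 0 < n) (L : ℝ) (hL : 0 < L)
    (f : Fin n → EuclideanSpace ℝ (Fin d) → ℝ)
    (hconv : ∀ i, ConvexOn ℝ Set.univ (f i))
    (hdiff : ∀ i, Differentiable ℝ (f i))
    (hlip : ∀ i x y, ‖gradient (f i) x - gradient (f i) y‖ ≤ L * ‖x - y‖)
    (favg : EuclideanSpace ℝ (Fin d) → ℝ)
    (hfavg : ∀ x, favg x = (1 / n : ℝ) * ∑ i, f i x)
    (xstar : EuclideanSpace ℝ (Fin d))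
    (hmin : ∀ x, favg xstar ≤ favg x)
    (x xt : EuclideanSpace ℝ (Fin d)) :
    (1 / n : ℝ) * ∑ i,
        ‖(gradient (f i) x - gradient (f i) xt + gradient favg xt) - gradient favg x‖ ^ 2
      ≤ 4 * L * ((favg x - favg xstar) + (favg xt - favg xstar)) :=
  stmt_1_general d n L hL f hconv hdiff hlip favg hfavg xstar hmin x xt
end

section
/- One-step inner bound for proximal (composite) VR-SGD: Let F = f + g with f = (1/n)∑f_i, each f_i L-smooth with 4L[F(x) − F(x*) + F(x̃) − F(x*)] bounding the estimator variance, g convex, x* minimizing F, and η = 1/(Lβ) with β > 1. Given x_k, let g_i = ∇f_i(x_k) − ∇f_i(x̃) + ∇f(x̃) and x_{k+1}^{(i)} = argmin_y { g(y) + ⟨g_i, y⟩ + (1/(2η))‖y − x_k‖² }. Then E[F(x_{k+1}^{(i)})] − F(x*) ≤ (2/(β−1))[F(x_k) − F(x*) + F(x̃) − F(x*)] + (Lβ/2) E[‖x* − x_k‖² − ‖x* − x_{k+1}^{(i)}‖²]. -/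
open scoped BigOperators RealInnerProductSpace

open Set Filter Topology

/-!
The prox step minimises a strongly convex function, so it satisfies the three-point inequality.
Adding the descent lemma at `x_k` and the gradient inequality of the convex `f` towards `x*`, one
step exceeds `F(x*)` by at most `⟪e_i, x* - x_k⟫ + ‖e_i‖² / (2L(β - 1))` plus the telescoping
distance term, where `e_i` is the error of the variance-reduced gradient and Young's inequality
absorbs the cross term against the slack `L(β - 1)/2 ‖x_{k+1} - x_k‖²` left by the step size. The
estimator is unbiased, so the inner product averages out, and its variance is at most the second
moment of `∇f_i(x_k) - ∇f_i(x̃)`; co-coercivity of each `∇f_i` together with the optimality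
condition at `x*` bounds that by `4L[F(x_k) - F(x*) + F(x̃) - F(x*)]`.
-/

section InnerProductSpace

variable {E : Type*} [NormedAddCommGroup E] [InnerProductSpace ℝ E]

theorem StrongConvexOn.add_sq_norm_sub_le_of_isMinOn {f : E → ℝ} {m : ℝ} {x : E}
    (hf : StrongConvexOn univ m f) (hx : IsMinOn f univ x) (y : E) :
    f x + m / 2 * ‖y - x‖ ^ 2 ≤ f y := by
  have key : ∀ t ∈ Ioo (0 : ℝ) 1, f x + (1 - t) * (m / 2 * ‖y - x‖ ^ 2) ≤ f y := by
    rintro t ⟨ht0, ht1⟩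
    have hconv := hf.2 (mem_univ x) (mem_univ y) (sub_nonneg.2 ht1.le) ht0.le (by ring)
    have hmin := isMinOn_univ_iff.1 hx ((1 - t) • x + t • y)
    rw [norm_sub_rev] at hconv
    simp only [smul_eq_mul] at hconv
    refine le_of_mul_le_mul_left ?_ ht0
    linear_combination hmin + hconv
  have hlim : Tendsto (fun t : ℝ => f x + (1 - t) * (m / 2 * ‖y - x‖ ^ 2)) (𝓝[>] 0)
      (𝓝 (f x + m / 2 * ‖y - x‖ ^ 2)) := by
    have : Continuous fun t : ℝ => f x + (1 - t) * (m / 2 * ‖y - x‖ ^ 2) := by fun_prop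
    simpa using (this.tendsto 0).mono_left nhdsWithin_le_nhds
  exact le_of_tendsto hlim (by filter_upwards [Ioo_mem_nhdsGT one_pos] with t ht using key t ht)

def proxObjective (g : E → ℝ) (v x : E) (c : ℝ) (y : E) : ℝ :=
  g y + ⟪v, y⟫ + c * ‖y - x‖ ^ 2

theorem ConvexOn.strongConvexOn_proxObjective {g : E → ℝ} (hg : ConvexOn ℝ univ g) (v x : E)
    (c : ℝ) : StrongConvexOn univ (2 * c) (proxObjective g v x c) := by
  rw [strongConvexOn_iff_convex]
  have haff : (fun y => proxObjective g v x c y - 2 * c / 2 * ‖y‖ ^ 2)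
      = fun y => g y + (innerₗ E (v - (2 * c) • x) y + c * ‖x‖ ^ 2) := by
    ext y
    simp only [proxObjective, innerₗ_apply_apply, norm_sub_sq_real, inner_sub_left,
      real_inner_smul_left, real_inner_comm x y]
    ring
  rw [haff]
  exact hg.add (((innerₗ E _).convexOn convex_univ).add_const _)

theorem real_inner_le_sq_div_add_mul_sq (u w : E) {c : ℝ} (hc : 0 < c) :
    ⟪u, w⟫ ≤ ‖u‖ ^ 2 / (2 * c) + c / 2 * ‖w‖ ^ 2 := by
  have hsq : 0 ≤ (‖u‖ - c * ‖w‖) ^ 2 / (2 * c) := by positivity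
  have : (‖u‖ - c * ‖w‖) ^ 2 / (2 * c) = ‖u‖ ^ 2 / (2 * c) + c / 2 * ‖w‖ ^ 2 - ‖u‖ * ‖w‖ := by
    field_simp; ring
  linarith [real_inner_le_norm u w]

theorem sum_sq_norm_sub_average_le {n : ℕ} (a : Fin n → E) :
    ∑ i, ‖a i - (1 / n : ℝ) • ∑ j, a j‖ ^ 2 ≤ ∑ i, ‖a i‖ ^ 2 := by
  set abar := (1 / n : ℝ) • ∑ j, a j
  have hcross : ∑ i, ⟪a i, abar⟫ = n * ‖abar‖ ^ 2 := by
    rcases Nat.eq_zero_or_pos n with rfl | hn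
    · simp
    · have hsum : ∑ j, a j = (n : ℝ) • abar := by
        rw [smul_smul, mul_one_div_cancel (by positivity), one_smul]
      rw [← sum_inner, hsum, real_inner_smul_left, real_inner_self_eq_norm_sq]
  have hnorm : ∑ i, ‖a i - abar‖ ^ 2 = ∑ i, ‖a i‖ ^ 2 - 2 * ∑ i, ⟪a i, abar⟫ + n * ‖abar‖ ^ 2 := by
    simp only [norm_sub_sq_real, Finset.sum_add_distrib, Finset.sum_sub_distrib, ← Finset.mul_sum,
      Finset.sum_const, Finset.card_univ, Fintype.card_fin, nsmul_eq_mul]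
  have : 0 ≤ (n : ℝ) * ‖abar‖ ^ 2 := by positivity
  linarith

noncomputable def average {n : ℕ} (f : Fin n → E → ℝ) (x : E) : ℝ := (1 / n : ℝ) * ∑ i, f i x

theorem convexOn_average {n : ℕ} {f : Fin n → E → ℝ} (hf : ∀ i, ConvexOn ℝ univ (f i)) :
    ConvexOn ℝ univ (average f) := by
  have hsum : ConvexOn ℝ univ (∑ i, f i) :=
    Finset.sum_induction _ (ConvexOn ℝ univ) (fun _ _ => ConvexOn.add)
      (convexOn_const 0 convex_univ) fun i _ => hf i
  unfold average
  simpa only [Finset.sum_apply, smul_eq_mul] using hsum.smul (c := (1 / n : ℝ)) (by positivity)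

variable [CompleteSpace E]

theorem HasGradientAt.hasDerivAt_comp_add_smul {h : E → ℝ} {h' x u : E} {t : ℝ}
    (hh : HasGradientAt h h' (x + t • u)) :
    HasDerivAt (fun s : ℝ => h (x + s • u)) ⟪h', u⟫ t := by
  have hline : HasDerivAt (fun s : ℝ => x + s • u) u t := by
    simpa using ((hasDerivAt_id t).smul_const u).const_add x
  have := hh.hasFDerivAt.comp_hasDerivAt t hline
  rwa [InnerProductSpace.toDual_apply_apply] at this

theorem ConvexOn.add_inner_gradient_le_s9 {h : E → ℝ} (hc : ConvexOn ℝ univ h) {x : E}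
    (hd : DifferentiableAt ℝ h x) (y : E) : h x + ⟪gradient h x, y - x⟫ ≤ h y := by
  have hφ : ConvexOn ℝ univ (fun s : ℝ => h (x + s • (y - x))) := by
    simpa [Function.comp_def, AffineMap.lineMap_apply_module', add_comm]
      using hc.comp_affineMap (AffineMap.lineMap x y)
  have hder : HasDerivAt (fun s : ℝ => h (x + s • (y - x))) ⟪gradient h x, y - x⟫ 0 :=
    (by simpa using hd.hasGradientAt : HasGradientAt h _ (x + (0 : ℝ) • (y - x)))
      |>.hasDerivAt_comp_add_smul
  have := hφ.le_slope_of_hasDerivAt (mem_univ 0) (mem_univ 1) one_pos hder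
  simp only [slope_def_field, zero_smul, add_zero, one_smul, sub_zero, div_one,
    add_sub_cancel] at this
  linarith

theorem le_add_inner_gradient_add_sq_of_lipschitz {h : E → ℝ} {L : ℝ} (hd : Differentiable ℝ h)
    (hlip : ∀ x y, ‖gradient h x - gradient h y‖ ≤ L * ‖x - y‖) (x y : E) :
    h y ≤ h x + ⟪gradient h x, y - x⟫ + L / 2 * ‖y - x‖ ^ 2 := by
  set u := y - x
  let ψ : ℝ → ℝ := fun s => h (x + s • u) - s * ⟪gradient h x, u⟫ - L / 2 * s ^ 2 * ‖u‖ ^ 2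
  have hψ : ∀ s, HasDerivAt ψ
      (⟪gradient h (x + s • u), u⟫ - ⟪gradient h x, u⟫ - L * s * ‖u‖ ^ 2) s := by
    intro s
    have h1 : HasDerivAt (fun s : ℝ => h (x + s • u)) ⟪gradient h (x + s • u), u⟫ s :=
      (hd _).hasGradientAt.hasDerivAt_comp_add_smul
    have h2 := (hasDerivAt_id s).mul_const ⟪gradient h x, u⟫
    have h3 := ((hasDerivAt_pow 2 s).const_mul (L / 2)).mul_const (‖u‖ ^ 2)
    exact ((h1.sub h2).sub h3).congr_deriv (by ring)
  have hψ_nonpos : ∀ s ∈ interior (Icc (0 : ℝ) 1),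
      ⟪gradient h (x + s • u), u⟫ - ⟪gradient h x, u⟫ - L * s * ‖u‖ ^ 2 ≤ 0 := by
    intro s hs
    rw [interior_Icc] at hs
    rw [sub_nonpos]
    have hnorm : ‖s • u‖ = s * ‖u‖ := by rw [norm_smul, Real.norm_of_nonneg hs.1.le]
    calc ⟪gradient h (x + s • u), u⟫ - ⟪gradient h x, u⟫
        = ⟪gradient h (x + s • u) - gradient h x, u⟫ := (inner_sub_left _ _ _).symm
      _ ≤ ‖gradient h (x + s • u) - gradient h x‖ * ‖u‖ := real_inner_le_norm _ _
      _ ≤ L * ‖s • u‖ * ‖u‖ := by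
          gcongr; simpa using hlip (x + s • u) x
      _ = L * s * ‖u‖ ^ 2 := by rw [hnorm]; ring
  have hanti := antitoneOn_of_hasDerivWithinAt_nonpos (convex_Icc (0 : ℝ) 1)
    (fun s _ => (hψ s).continuousAt.continuousWithinAt) (fun s _ => (hψ s).hasDerivWithinAt)
    hψ_nonpos (left_mem_Icc.2 zero_le_one) (right_mem_Icc.2 zero_le_one) zero_le_one
  simp only [ψ, u, zero_smul, one_smul, add_zero, add_sub_cancel] at hanti
  linarith

theorem ConvexOn.sq_norm_sub_gradient_le {h : E → ℝ} {L : ℝ} (hc : ConvexOn ℝ univ h)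
    (hd : Differentiable ℝ h) (hL : 0 < L)
    (hlip : ∀ x y, ‖gradient h x - gradient h y‖ ≤ L * ‖x - y‖) (x y : E) :
    ‖gradient h x - gradient h y‖ ^ 2 ≤ 2 * L * (h x - h y - ⟪gradient h y, x - y⟫) := by
  set w := gradient h x - gradient h y
  -- the gradient step from `x` for `h - ⟪∇h y, ·⟫`, which is minimised at `y`
  set z := x - L⁻¹ • w
  have hup := le_add_inner_gradient_add_sq_of_lipschitz hd hlip x z
  have hlow := hc.add_inner_gradient_le_s9 (hd y) z
  have hzx : z - x = -(L⁻¹ • w) := by simp [z]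
  have hzy : z - y = (x - y) - L⁻¹ • w := by simp only [z]; abel
  have hw : ⟪gradient h x, w⟫ - ⟪gradient h y, w⟫ = ‖w‖ ^ 2 := by
    rw [← inner_sub_left, real_inner_self_eq_norm_sq]
  rw [hzx, inner_neg_right, real_inner_smul_right, norm_neg, norm_smul, Real.norm_of_nonneg
    (inv_nonneg.2 hL.le)] at hup
  rw [hzy, inner_sub_right, real_inner_smul_right] at hlow
  have key : L⁻¹ * ‖w‖ ^ 2 - L / 2 * (L⁻¹ * ‖w‖) ^ 2 ≤ h x - h y - ⟪gradient h y, x - y⟫ := by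
    linear_combination hup + hlow - L⁻¹ * hw
  have hsimp : L⁻¹ * ‖w‖ ^ 2 - L / 2 * (L⁻¹ * ‖w‖) ^ 2 = ‖w‖ ^ 2 / (2 * L) := by
    field_simp; ring
  rw [hsimp, div_le_iff₀ (by positivity)] at key
  linarith

theorem inner_gradient_add_le_of_isMinOn {f g : E → ℝ} {x : E} (hf : DifferentiableAt ℝ f x)
    (hg : ConvexOn ℝ univ g) (hmin : IsMinOn (fun y => f y + g y) univ x) (w : E) :
    g x ≤ g w + ⟪gradient f x, w - x⟫ := by
  have hder : HasDerivAt (fun s : ℝ => f (x + s • (w - x))) ⟪gradient f x, w - x⟫ 0 :=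
    (by simpa using hf.hasGradientAt : HasGradientAt f _ (x + (0 : ℝ) • (w - x)))
      |>.hasDerivAt_comp_add_smul
  suffices g x - g w ≤ ⟪gradient f x, w - x⟫ by linarith
  refine ge_of_tendsto hder.tendsto_slope_zero_right ?_
  filter_upwards [Ioo_mem_nhdsGT one_pos] with t ⟨ht0, ht1⟩
  have hgt : g (x + t • (w - x)) ≤ (1 - t) * g x + t * g w := by
    have hcomb : x + t • (w - x) = (1 - t) • x + t • w := by
      rw [sub_smul, smul_sub, one_smul]; abel
    rw [hcomb]
    simpa using hg.2 (mem_univ x) (mem_univ w) (sub_nonneg.2 ht1.le) ht0.le (by ring)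
  have hFt := isMinOn_univ_iff.1 hmin (x + t • (w - x))
  simp only [zero_add, zero_smul, add_zero, smul_eq_mul]
  rw [← div_eq_inv_mul, le_div_iff₀ ht0]
  linarith

theorem sub_le_of_isMinOn_proxObjective {f g : E → ℝ} {L β : ℝ} (hL : 0 < L) (hβ : 1 < β)
    (hf : ConvexOn ℝ univ f) (hd : Differentiable ℝ f)
    (hlip : ∀ x y, ‖gradient f x - gradient f y‖ ≤ L * ‖x - y‖) (hg : ConvexOn ℝ univ g)
    {v x p : E} (hp : IsMinOn (proxObjective g v x (L * β / 2)) univ p) (y : E) :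
    f p + g p - (f y + g y)
      ≤ ⟪v - gradient f x, y - x⟫ + ‖v - gradient f x‖ ^ 2 / (2 * (L * (β - 1)))
        + L * β / 2 * (‖y - x‖ ^ 2 - ‖y - p‖ ^ 2) := by
  have hprox := (hg.strongConvexOn_proxObjective v x _).add_sq_norm_sub_le_of_isMinOn hp y
  have hdesc := le_add_inner_gradient_add_sq_of_lipschitz hd hlip x p
  have hcvx := hf.add_inner_gradient_le_s9 (hd x) y
  have hyoung := real_inner_le_sq_div_add_mul_sq (v - gradient f x) (x - p)
    (mul_pos hL (sub_pos.2 hβ))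
  rw [norm_sub_rev x p] at hyoung
  have hsplit : ⟪v - gradient f x, y - x⟫ + ⟪v - gradient f x, x - p⟫
      = ⟪v, y⟫ - ⟪v, p⟫ - ⟪gradient f x, y - x⟫ + ⟪gradient f x, p - x⟫ := by
    simp only [inner_sub_left, inner_sub_right]; ring
  simp only [proxObjective] at hprox
  linarith

noncomputable def svrgEstimator {n : ℕ} (f : Fin n → E → ℝ) (x xt : E) (i : Fin n) : E :=
  gradient (f i) x - gradient (f i) xt + gradient (average f) xt

variable {n : ℕ} {f : Fin n → E → ℝ} {L : ℝ} {g : E → ℝ} {xstar : E}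

theorem hasGradientAt_average {x : E} (hf : ∀ i, DifferentiableAt ℝ (f i) x) :
    HasGradientAt (average f) ((1 / n : ℝ) • ∑ i, gradient (f i) x) x := by
  have := (HasFDerivAt.fun_sum (u := Finset.univ) fun i _ => (hf i).hasFDerivAt).const_mul
    (1 / n : ℝ)
  rw [hasFDerivAt_iff_hasGradientAt, map_smul, map_sum] at this
  exact this

theorem differentiable_average (hf : ∀ i, Differentiable ℝ (f i)) :
    Differentiable ℝ (average f) :=
  fun x => (hasGradientAt_average fun i => hf i x).differentiableAt

theorem gradient_average (hf : ∀ i, Differentiable ℝ (f i)) (x : E) :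
    gradient (average f) x = (1 / n : ℝ) • ∑ i, gradient (f i) x :=
  (hasGradientAt_average fun i => hf i x).gradient

theorem norm_gradient_average_sub_le (hn : 0 < n) (hf : ∀ i, Differentiable ℝ (f i))
    (hlip : ∀ i x y, ‖gradient (f i) x - gradient (f i) y‖ ≤ L * ‖x - y‖) (x y : E) :
    ‖gradient (average f) x - gradient (average f) y‖ ≤ L * ‖x - y‖ := by
  rw [gradient_average hf, gradient_average hf, ← smul_sub, ← Finset.sum_sub_distrib,
    norm_smul, Real.norm_of_nonneg (by positivity)]
  calc (1 / n : ℝ) * ‖∑ i, (gradient (f i) x - gradient (f i) y)‖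
      ≤ (1 / n : ℝ) * ∑ _i : Fin n, L * ‖x - y‖ := by
        gcongr
        exact (norm_sum_le _ _).trans (Finset.sum_le_sum fun i _ => hlip i x y)
    _ = L * ‖x - y‖ := by
        rw [Finset.sum_const, Finset.card_univ, Fintype.card_fin, nsmul_eq_mul]
        field_simp

theorem svrgEstimator_sub_gradient_average (hf : ∀ i, Differentiable ℝ (f i)) (x xt : E)
    (i : Fin n) :
    svrgEstimator f x xt i - gradient (average f) x
      = (gradient (f i) x - gradient (f i) xt)
        - (1 / n : ℝ) • ∑ j, (gradient (f j) x - gradient (f j) xt) := by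
  simp only [svrgEstimator, gradient_average hf, Finset.sum_sub_distrib, smul_sub]
  abel

theorem sum_svrgEstimator_sub_gradient_average (hn : 0 < n) (hf : ∀ i, Differentiable ℝ (f i))
    (x xt : E) : ∑ i, (svrgEstimator f x xt i - gradient (average f) x) = 0 := by
  simp only [svrgEstimator_sub_gradient_average hf, Finset.sum_sub_distrib, Finset.sum_const,
    Finset.card_univ, Fintype.card_fin, ← Nat.cast_smul_eq_nsmul ℝ, smul_smul,
    mul_one_div_cancel (Nat.cast_pos.2 hn : (0 : ℝ) < n).ne', one_smul, sub_self]

theorem average_sq_norm_gradient_sub_le (hL : 0 < L)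
    (hf : ∀ i, ConvexOn ℝ univ (f i)) (hd : ∀ i, Differentiable ℝ (f i))
    (hlip : ∀ i x y, ‖gradient (f i) x - gradient (f i) y‖ ≤ L * ‖x - y‖)
    (hg : ConvexOn ℝ univ g) (hmin : IsMinOn (fun y => average f y + g y) univ xstar) (w : E) :
    (1 / n : ℝ) * ∑ i, ‖gradient (f i) w - gradient (f i) xstar‖ ^ 2
      ≤ 2 * L * (average f w + g w - (average f xstar + g xstar)) := by
  have hopt := inner_gradient_add_le_of_isMinOn (differentiable_average hd xstar) hg hmin w
  calc (1 / n : ℝ) * ∑ i, ‖gradient (f i) w - gradient (f i) xstar‖ ^ 2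
      ≤ (1 / n : ℝ) * ∑ i, 2 * L * (f i w - f i xstar - ⟪gradient (f i) xstar, w - xstar⟫) := by
        gcongr with i
        exact (hf i).sq_norm_sub_gradient_le (hd i) hL (hlip i) w xstar
    _ = 2 * L * (average f w - average f xstar - ⟪gradient (average f) xstar, w - xstar⟫) := by
        simp only [average, gradient_average hd, real_inner_smul_left, sum_inner,
          ← Finset.mul_sum, Finset.sum_sub_distrib]
        ring
    _ ≤ 2 * L * (average f w + g w - (average f xstar + g xstar)) :=
        mul_le_mul_of_nonneg_left (by linarith) (by positivity)

theorem average_sq_norm_svrgEstimator_sub_le (hL : 0 < L)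
    (hf : ∀ i, ConvexOn ℝ univ (f i)) (hd : ∀ i, Differentiable ℝ (f i))
    (hlip : ∀ i x y, ‖gradient (f i) x - gradient (f i) y‖ ≤ L * ‖x - y‖)
    (hg : ConvexOn ℝ univ g) (hmin : IsMinOn (fun y => average f y + g y) univ xstar) (x xt : E) :
    (1 / n : ℝ) * ∑ i, ‖svrgEstimator f x xt i - gradient (average f) x‖ ^ 2
      ≤ 4 * L * ((average f x + g x - (average f xstar + g xstar))
        + (average f xt + g xt - (average f xstar + g xstar))) := by
  have hdev : ∑ i, ‖svrgEstimator f x xt i - gradient (average f) x‖ ^ 2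
      ≤ ∑ i, ‖gradient (f i) x - gradient (f i) xt‖ ^ 2 := by
    simp only [svrgEstimator_sub_gradient_average hd]
    exact sum_sq_norm_sub_average_le _
  have hpar : ∀ a b : E, ‖a - b‖ ^ 2 ≤ 2 * ‖a‖ ^ 2 + 2 * ‖b‖ ^ 2 := fun a b => by
    nlinarith [parallelogram_law_with_norm ℝ a b, norm_nonneg (a + b)]
  have hsplit : ∀ i, ‖gradient (f i) x - gradient (f i) xt‖ ^ 2
      ≤ 2 * ‖gradient (f i) x - gradient (f i) xstar‖ ^ 2
        + 2 * ‖gradient (f i) xt - gradient (f i) xstar‖ ^ 2 := fun i => by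
    rw [← sub_sub_sub_cancel_right _ _ (gradient (f i) xstar)]
    exact hpar _ _
  have hx := average_sq_norm_gradient_sub_le hL hf hd hlip hg hmin x
  have hxt := average_sq_norm_gradient_sub_le hL hf hd hlip hg hmin xt
  have hsum := mul_le_mul_of_nonneg_left (hdev.trans (Finset.sum_le_sum fun i _ => hsplit i))
    (by positivity : (0 : ℝ) ≤ 1 / n)
  rw [Finset.sum_add_distrib, ← Finset.mul_sum, ← Finset.mul_sum] at hsum
  linarith

theorem average_sub_le_of_isMinOn_proxObjective_svrgEstimator (hn : 0 < n) (hL : 0 < L)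
    {β : ℝ} (hβ : 1 < β) (hf : ∀ i, ConvexOn ℝ univ (f i)) (hd : ∀ i, Differentiable ℝ (f i))
    (hlip : ∀ i x y, ‖gradient (f i) x - gradient (f i) y‖ ≤ L * ‖x - y‖)
    (hg : ConvexOn ℝ univ g) (hmin : IsMinOn (fun y => average f y + g y) univ xstar)
    {xk xt : E} {p : Fin n → E}
    (hp : ∀ i, IsMinOn (proxObjective g (svrgEstimator f xk xt i) xk (L * β / 2)) univ (p i)) :
    (1 / n : ℝ) * ∑ i, (average f (p i) + g (p i)) - (average f xstar + g xstar)
      ≤ 2 / (β - 1) * ((average f xk + g xk - (average f xstar + g xstar))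
          + (average f xt + g xt - (average f xstar + g xstar)))
        + L * β / 2 * ((1 / n : ℝ) * ∑ i, (‖xstar - xk‖ ^ 2 - ‖xstar - p i‖ ^ 2)) := by
  set e : Fin n → E := fun i => svrgEstimator f xk xt i - gradient (average f) xk
  have hstep : ∀ i, average f (p i) + g (p i) - (average f xstar + g xstar)
      ≤ ⟪e i, xstar - xk⟫ + ‖e i‖ ^ 2 / (2 * (L * (β - 1)))
        + L * β / 2 * (‖xstar - xk‖ ^ 2 - ‖xstar - p i‖ ^ 2) := fun i =>
    sub_le_of_isMinOn_proxObjective hL hβ (convexOn_average hf) (differentiable_average hd)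
      (norm_gradient_average_sub_le hn hd hlip) hg (hp i) xstar
  have hunbiased : ∑ i, e i = 0 := sum_svrgEstimator_sub_gradient_average hn hd xk xt
  have hvar : (1 / n : ℝ) * ∑ i, ‖e i‖ ^ 2
      ≤ 4 * L * ((average f xk + g xk - (average f xstar + g xstar))
        + (average f xt + g xt - (average f xstar + g xstar))) :=
    average_sq_norm_svrgEstimator_sub_le hL hf hd hlip hg hmin xk xt
  have hc : 0 < 2 * (L * (β - 1)) := by have := sub_pos.2 hβ; positivity
  calc (1 / n : ℝ) * ∑ i, (average f (p i) + g (p i)) - (average f xstar + g xstar)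
      = (1 / n : ℝ) * ∑ i, (average f (p i) + g (p i) - (average f xstar + g xstar)) := by
        rw [Finset.sum_sub_distrib, Finset.sum_const, Finset.card_univ, Fintype.card_fin,
          nsmul_eq_mul]
        field_simp
    _ ≤ (1 / n : ℝ) * ∑ i, (⟪e i, xstar - xk⟫ + ‖e i‖ ^ 2 / (2 * (L * (β - 1)))
        + L * β / 2 * (‖xstar - xk‖ ^ 2 - ‖xstar - p i‖ ^ 2)) := by
        gcongr with i; exact hstep i
    _ = ((1 / n : ℝ) * ∑ i, ‖e i‖ ^ 2) / (2 * (L * (β - 1)))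
        + L * β / 2 * ((1 / n : ℝ) * ∑ i, (‖xstar - xk‖ ^ 2 - ‖xstar - p i‖ ^ 2)) := by
        rw [Finset.sum_add_distrib, Finset.sum_add_distrib, ← sum_inner, hunbiased,
          inner_zero_left, ← Finset.sum_div, ← Finset.mul_sum]
        ring
    _ ≤ 4 * L * ((average f xk + g xk - (average f xstar + g xstar))
          + (average f xt + g xt - (average f xstar + g xstar))) / (2 * (L * (β - 1)))
        + L * β / 2 * ((1 / n : ℝ) * ∑ i, (‖xstar - xk‖ ^ 2 - ‖xstar - p i‖ ^ 2)) := by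
        gcongr ?_ + _
        exact div_le_div_of_nonneg_right hvar hc.le
    _ = _ := by field_simp; ring

end InnerProductSpace

/-- one-step inner bound for proximal (composite) VR-SGD; the expectation
over the uniformly random index `i` is the average over `i : Fin n`. -/
theorem stmt_9 (d n : ℕ) (hn : 0 < n) (L β η : ℝ) (hL : 0 < L) (hβ : 1 < β)
    (hη : η = 1 / (L * β))
    (f : Fin n → EuclideanSpace ℝ (Fin d) → ℝ)
    (hconv : ∀ i, ConvexOn ℝ Set.univ (f i))
    (hdiff : ∀ i, Differentiable ℝ (f i))
    (hlip : ∀ i x y, ‖gradient (f i) x - gradient (f i) y‖ ≤ L * ‖x - y‖)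
    (favg : EuclideanSpace ℝ (Fin d) → ℝ)
    (hfavg : ∀ x, favg x = (1 / n : ℝ) * ∑ i, f i x)
    (g : EuclideanSpace ℝ (Fin d) → ℝ) (hgconv : ConvexOn ℝ Set.univ g)
    (F : EuclideanSpace ℝ (Fin d) → ℝ) (hF : ∀ x, F x = favg x + g x)
    (xstar : EuclideanSpace ℝ (Fin d)) (hmin : ∀ x, F xstar ≤ F x)
    (xk xt : EuclideanSpace ℝ (Fin d))
    (xnext : Fin n → EuclideanSpace ℝ (Fin d))
    (hxnext : ∀ i y,
      g (xnext i) + ⟪gradient (f i) xk - gradient (f i) xt + gradient favg xt, xnext i⟫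
          + (1 / (2 * η)) * ‖xnext i - xk‖ ^ 2
        ≤ g y + ⟪gradient (f i) xk - gradient (f i) xt + gradient favg xt, y⟫
          + (1 / (2 * η)) * ‖y - xk‖ ^ 2) :
    (1 / n : ℝ) * ∑ i, (F (xnext i)) - F xstar
      ≤ (2 / (β - 1)) * ((F xk - F xstar) + (F xt - F xstar))
        + (L * β / 2) *
          ((1 / n : ℝ) * ∑ i, (‖xstar - xk‖ ^ 2 - ‖xstar - xnext i‖ ^ 2)) := by
  obtain rfl : favg = average f := funext hfavg
  obtain rfl : F = fun x => average f x + g x := funext hF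
  have hη' : 1 / (2 * η) = L * β / 2 := by rw [hη]; field_simp
  exact average_sub_le_of_isMinOn_proxObjective_svrgEstimator hn hL hβ hconv hdiff hlip hgconv
    (isMinOn_univ_iff.2 hmin) fun i => isMinOn_univ_iff.2 fun y => by
      simpa only [proxObjective, svrgEstimator, hη'] using hxnext i y
end
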